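/- A polynomial sequence (p_n)_{n≥0} with deg p_n = n is the ∂_F-basic polynomial sequence of some ∂_F-delta operator Q if and only if it is of F-binomial type, i.e. for every y ∈ K and every n ≥ 0 one has E^y(∂_F) p_n = Σ_{k=0}^{n} C_F(n,k) · p_{n−k}(y) · p_k, where p_{n−k}(y) ∈ K is the evaluation of p_{n−k} at y. -/

import Mathlib

open Polynomial Finset

/-- F-factorial: `Ffact n = F_n · F_{n-1} ··· F_1`, with `Ffact 0 = 1`. -/
def Ffact (n : ℕ) : ℕ := ∏ i ∈ Finset.range n, Nat.fib (i + 1)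

/-- Fibonomial coefficient `C_F(n,k) = F_n!/(F_k!·F_{n−k}!)`, taken in a field `K`. -/
noncomputable def fibnom (K : Type*) [Field K] (n k : ℕ) : K :=
  (Ffact n : K) / ((Ffact k : K) * (Ffact (n - k) : K))

variable (K : Type*) [Field K] [CharZero K]

/-- The F-derivative `∂_F`, the linear operator with `∂_F x^n = F_n x^{n-1}`. -/
noncomputable def fderivF : Module.End K (Polynomial K) :=
  Polynomial.lsum fun n => (Nat.fib n : K) • (Polynomial.monomial (n - 1) : K →ₗ[K] Polynomial K)

/-- The F-translation operator `E^y(∂_F) = Σ_{k≥0} (y^k/F_k!) ∂_F^k`; since `∂_F`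
strictly decreases degree, the sum truncated at `natDegree p + 1` is the full sum. -/
noncomputable def Etrans (y : K) (p : Polynomial K) : Polynomial K :=
  ∑ k ∈ Finset.range (p.natDegree + 1), (y ^ k / (Ffact k : K)) • ((fderivF K ^ k) p)

/-- A linear operator on `K[x]` is `∂_F`-shift invariant iff it commutes with every
F-translation operator `E^y(∂_F)`. -/
def ShiftInv (T : Module.End K (Polynomial K)) : Prop :=
  ∀ (y : K) (p : Polynomial K), T (Etrans K y p) = Etrans K y (T p)

/-- A `∂_F`-delta operator: a `∂_F`-shift invariant operator `Q` with `Q x` a nonzero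
constant. -/
def DeltaOp (Q : Module.End K (Polynomial K)) : Prop :=
  ShiftInv K Q ∧ ∃ c : K, c ≠ 0 ∧ Q Polynomial.X = Polynomial.C c

/-- `(q_n)` is the `∂_F`-basic polynomial sequence of `Q`. -/
def BasicSeq (Q : Module.End K (Polynomial K)) (q : ℕ → Polynomial K) : Prop :=
  (∀ n : ℕ, (q n).degree = n) ∧ q 0 = 1 ∧ (∀ n : ℕ, 1 ≤ n → (q n).eval 0 = 0) ∧
    ∀ n : ℕ, 1 ≤ n → Q (q n) = (Nat.fib n : K) • q (n - 1)

/-- The operator `x̂_F`, with `x̂_F x^n = ((n+1)/F_{n+1}) x^{n+1}`. -/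
noncomputable def xF : Module.End K (Polynomial K) :=
  Polynomial.lsum fun n =>
    (((n : K) + 1) / (Nat.fib (n + 1) : K)) • (Polynomial.monomial (n + 1) : K →ₗ[K] Polynomial K)

/-- The Graves–Pincherle F-derivative `T' = T∘x̂_F − x̂_F∘T`. -/
noncomputable def GPderiv (T : Module.End K (Polynomial K)) : Module.End K (Polynomial K) :=
  T * xF K - xF K * T

/-- `T = Σ_{k≥0} (a_k/F_k!) Q^k`, expressed via truncations: since a delta operator `Q`
strictly decreases degree, `Q^k p = 0` for `k > natDegree p`, so the truncated sums agree. -/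
def OpSumRep (Q : Module.End K (Polynomial K)) (a : ℕ → K) (T : Module.End K (Polynomial K)) : Prop :=
  ∀ (p : Polynomial K) (N : ℕ), p.natDegree < N →
    T p = ∑ k ∈ Finset.range N, (a k / (Ffact k : K)) • ((Q ^ k) p)

/-- `(s_n)` is a sequence of Sheffer F-polynomials of `Q`. -/
def ShefferSeq (Q : Module.End K (Polynomial K)) (s : ℕ → Polynomial K) : Prop :=
  (∀ n : ℕ, (s n).degree = n) ∧ (∃ c : K, c ≠ 0 ∧ s 0 = Polynomial.C c) ∧
    ∀ n : ℕ, 1 ≤ n → Q (s n) = (Nat.fib n : K) • s (n - 1)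

/-! ### Auxiliary lemmas -/

set_option linter.unusedSectionVars false
set_option maxHeartbeats 1000000

lemma Ffact_pos (n : ℕ) : 0 < Ffact n :=
  Finset.prod_pos fun i _ => Nat.fib_pos.2 (Nat.succ_pos i)

lemma Ffact_succ' (n : ℕ) : Ffact (n + 1) = Ffact n * Nat.fib (n + 1) :=
  Finset.prod_range_succ _ n

lemma Ffact_ne_zero' (n : ℕ) : (Ffact n : K) ≠ 0 :=
  Nat.cast_ne_zero.2 (Ffact_pos n).ne'

lemma fib_cast_ne_zero' {n : ℕ} (h : 1 ≤ n) : (Nat.fib n : K) ≠ 0 :=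
  Nat.cast_ne_zero.2 (Nat.fib_pos.2 h).ne'

lemma fibnom_zero_right (n : ℕ) : fibnom K n 0 = 1 := by
  rw [fibnom, Nat.sub_zero, show Ffact 0 = 1 from rfl]
  push_cast
  rw [one_mul]
  exact div_self (Ffact_ne_zero' K n)

lemma fibnom_self (n : ℕ) : fibnom K n n = 1 := by
  rw [fibnom, Nat.sub_self, show Ffact 0 = 1 from rfl]
  push_cast
  rw [mul_one]
  exact div_self (Ffact_ne_zero' K n)

lemma fibnom_key {n j : ℕ} (h : j < n) :
    fibnom K n (j + 1) * (Nat.fib (j + 1) : K) = (Nat.fib n : K) * fibnom K (n - 1) j := by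
  obtain ⟨m, rfl⟩ : ∃ m, n = j + 1 + m := ⟨n - (j + 1), by omega⟩
  have e1 : j + 1 + m - (j + 1) = m := by omega
  have e2 : j + 1 + m - 1 = j + m := by omega
  have e3 : j + m - j = m := by omega
  have e4 : j + 1 + m = (j + m) + 1 := by omega
  rw [fibnom, fibnom, e1, e2, e3, e4, Ffact_succ' (j + m), Ffact_succ' j]
  have h1 : (Ffact (j + m) : K) ≠ 0 := Ffact_ne_zero' K _
  have h2 : (Ffact j : K) ≠ 0 := Ffact_ne_zero' K _
  have h3 : (Ffact m : K) ≠ 0 := Ffact_ne_zero' K _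
  have h4 : (Nat.fib (j + 1) : K) ≠ 0 := fib_cast_ne_zero' K (by omega)
  push_cast
  field_simp

lemma fderivF_monomial (n : ℕ) (a : K) :
    fderivF K (monomial n a) = (Nat.fib n : K) • monomial (n - 1) a := by
  simp [fderivF, Polynomial.lsum_apply, Polynomial.sum_monomial_index]

lemma fderivF_degree_lt {q : Polynomial K} {n : ℕ} (h : q.degree < ((n + 1 : ℕ) : WithBot ℕ)) :
    (fderivF K q).degree < (n : WithBot ℕ) := by
  have hrep : fderivF K q = ∑ m ∈ q.support, (Nat.fib m : K) • monomial (m - 1) (q.coeff m) := by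
    rw [fderivF, Polynomial.lsum_apply]; rfl
  rw [hrep]
  apply lt_of_le_of_lt (Polynomial.degree_sum_le _ _)
  rw [Finset.sup_lt_iff (by exact WithBot.bot_lt_coe n)]
  intro m hm
  rcases Nat.eq_zero_or_pos m with rfl | hm1
  · simp only [Nat.fib_zero, Nat.cast_zero, zero_smul, degree_zero]
    exact WithBot.bot_lt_coe n
  · refine lt_of_le_of_lt (degree_smul_le _ _) (lt_of_le_of_lt (degree_monomial_le _ _) ?_)
    have h2 : m ≤ q.natDegree := Polynomial.le_natDegree_of_mem_supp m hm
    have hq : q ≠ 0 := by intro h0; simp [h0] at hm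
    have h3 : m < n + 1 := by
      have := (Polynomial.natDegree_lt_iff_degree_lt hq).2 h
      omega
    exact_mod_cast (show m - 1 < n by omega)

lemma fderivF_pow_degree_lt {k n : ℕ} {q : Polynomial K}
    (h : q.degree < ((n + k : ℕ) : WithBot ℕ)) :
    ((fderivF K ^ k) q).degree < (n : WithBot ℕ) := by
  induction k generalizing q with
  | zero => simpa using h
  | succ k ih =>
    rw [pow_succ, Module.End.mul_apply]
    refine ih ?_
    exact fderivF_degree_lt K (by rw [show n + k + 1 = n + (k + 1) by ring]; exact h)

lemma fderivF_pow_eq_zero {q : Polynomial K} {k : ℕ} (h : q.natDegree < k) :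
    (fderivF K ^ k) q = 0 := by
  have hd : q.degree < ((0 + k : ℕ) : WithBot ℕ) := by
    rcases eq_or_ne q 0 with rfl | hq
    · rw [Polynomial.degree_zero]; exact WithBot.bot_lt_coe _
    · exact (Polynomial.natDegree_lt_iff_degree_lt hq).1 (by omega)
  have := fderivF_pow_degree_lt K (k := k) (n := 0) hd
  rw [Nat.cast_zero, Nat.WithBot.lt_zero_iff, Polynomial.degree_eq_bot] at this
  exact this

lemma Etrans_eq_sum (y : K) {q : Polynomial K} {N : ℕ} (h : q.natDegree < N) :
    Etrans K y q = ∑ k ∈ Finset.range N, (y ^ k / (Ffact k : K)) • ((fderivF K ^ k) q) := by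
  rw [Etrans]
  apply Finset.sum_subset (Finset.range_subset_range.2 (by omega))
  intro k _ hk
  rw [Finset.mem_range, not_lt] at hk
  rw [fderivF_pow_eq_zero K (by omega), smul_zero]

lemma Etrans_zero (y : K) : Etrans K y 0 = 0 := by
  simp [Etrans]

lemma Etrans_add (y : K) (q r : Polynomial K) :
    Etrans K y (q + r) = Etrans K y q + Etrans K y r := by
  set N := max (q + r).natDegree (max q.natDegree r.natDegree) + 1 with hN
  rw [Etrans_eq_sum K y (show (q + r).natDegree < N by omega),
      Etrans_eq_sum K y (show q.natDegree < N by omega),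
      Etrans_eq_sum K y (show r.natDegree < N by omega), ← Finset.sum_add_distrib]
  exact Finset.sum_congr rfl fun k _ => by rw [map_add, smul_add]

lemma Etrans_smul (y : K) (c : K) (q : Polynomial K) :
    Etrans K y (c • q) = c • Etrans K y q := by
  set N := max (c • q).natDegree q.natDegree + 1 with hN
  rw [Etrans_eq_sum K y (show (c • q).natDegree < N by omega),
      Etrans_eq_sum K y (show q.natDegree < N by omega), Finset.smul_sum]
  exact Finset.sum_congr rfl fun k _ => by rw [map_smul, smul_comm]

lemma Etrans_sum (y : K) {ι : Type*} (s : Finset ι) (f : ι → Polynomial K) :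
    Etrans K y (∑ i ∈ s, f i) = ∑ i ∈ s, Etrans K y (f i) := by
  induction s using Finset.cons_induction with
  | empty => simp [Etrans_zero]
  | cons i s hi ih => rw [Finset.sum_cons, Finset.sum_cons, Etrans_add, ih]

lemma fderivF_pow_monomial (n k : ℕ) (a : K) :
    (fderivF K ^ k) (monomial n a) =
      monomial (n - k) ((∏ i ∈ Finset.range k, (Nat.fib (n - i) : K)) * a) := by
  induction k with
  | zero => simp
  | succ k ih =>
    rw [pow_succ', Module.End.mul_apply, ih]
    have : fderivF K (monomial (n - k) ((∏ i ∈ Finset.range k, (Nat.fib (n - i) : K)) * a)) =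
        (Nat.fib (n - k) : K) • monomial (n - k - 1)
          ((∏ i ∈ Finset.range k, (Nat.fib (n - i) : K)) * a) := by
      simp [fderivF, Polynomial.lsum_apply, Polynomial.sum_monomial_index]
    rw [this, Polynomial.smul_monomial, Finset.prod_range_succ, Nat.sub_sub]
    congr 1
    rw [smul_eq_mul]
    ring

lemma Etrans_eval_zero (y : K) (q : Polynomial K) :
    (Etrans K y q).eval 0 = q.eval y := by
  induction q using Polynomial.induction_on' with
  | add p q hp hq => rw [Etrans_add, eval_add, hp, hq, eval_add]
  | monomial n a =>
    rcases eq_or_ne a 0 with rfl | ha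
    · simp [Etrans_zero]
    · have hnd : (monomial n a).natDegree = n := Polynomial.natDegree_monomial_eq n ha
      rw [Etrans, hnd, Polynomial.eval_finset_sum]
      rw [Finset.sum_eq_single n]
      · rw [fderivF_pow_monomial, Nat.sub_self, Polynomial.eval_smul, Polynomial.eval_monomial,
          pow_zero, mul_one]
        have hprod : (∏ i ∈ Finset.range n, (Nat.fib (n - i) : K)) = (Ffact n : K) := by
          rw [Ffact, Nat.cast_prod]
          rw [← Finset.prod_range_reflect (fun j => (Nat.fib (j + 1) : K)) n]
          apply Finset.prod_congr rfl
          intro j hj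
          rw [Finset.mem_range] at hj
          have : n - 1 - j + 1 = n - j := by omega
          rw [this]
        rw [hprod, Polynomial.eval_monomial]
        have hF : (Ffact n : K) ≠ 0 := Ffact_ne_zero' K n
        field_simp
        rw [smul_eq_mul, div_mul_eq_mul_div, div_eq_iff hF]
        ring
      · intro k hk hkn
        rw [fderivF_pow_monomial, Polynomial.eval_smul, Polynomial.eval_monomial]
        rw [Finset.mem_range] at hk
        simp [zero_pow (show n - k ≠ 0 by omega)]
      · intro h; exact absurd (Finset.self_mem_range_succ n) h

lemma Etrans_C (y a : K) : Etrans K y (C a) = C a := by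
  have h : (C a : Polynomial K).natDegree = 0 := natDegree_C a
  rw [Etrans, h, Finset.sum_range_one]
  simp [show Ffact 0 = 1 from rfl]

lemma Etrans_one (y : K) : Etrans K y 1 = 1 := by
  simpa using Etrans_C K y 1

lemma Etrans_X (y : K) : Etrans K y X = X + C y := by
  rw [Etrans, Polynomial.natDegree_X, Finset.sum_range_succ, Finset.sum_range_one]
  have h1 : (fderivF K ^ 1) (X : Polynomial K) = 1 := by
    rw [pow_one, ← Polynomial.monomial_one_one_eq_X, fderivF_monomial]
    simp
  rw [h1]
  simp [show Ffact 0 = 1 from rfl, show Ffact 1 = 1 from rfl, Polynomial.smul_eq_C_mul]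

/-! ### The basis given by a sequence of polynomials of degree `n` -/

lemma span_of_deg (p : ℕ → Polynomial K) (hdeg : ∀ n : ℕ, (p n).degree = n) :
    ⊤ ≤ Submodule.span K (Set.range p) := by
  have key : ∀ (N : ℕ) (f : Polynomial K), f.degree < (N : WithBot ℕ) →
      f ∈ Submodule.span K (Set.range p) := by
    intro N
    induction N with
    | zero =>
      intro f hf
      rw [Nat.cast_zero, Nat.WithBot.lt_zero_iff, Polynomial.degree_eq_bot] at hf
      simp [hf]
    | succ N ih =>
      intro f hf
      set c : K := f.coeff N / (p N).coeff N with hc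
      have hg : (f - c • p N).degree < (N : WithBot ℕ) := by
        rw [Polynomial.degree_lt_iff_coeff_zero]
        intro m hm
        rcases eq_or_lt_of_le hm with rfl | hm'
        · rw [Polynomial.coeff_sub, Polynomial.coeff_smul, hc, smul_eq_mul,
            div_mul_cancel₀, sub_self]
          exact Polynomial.coeff_ne_zero_of_eq_degree (hdeg N)
        · rw [Polynomial.coeff_sub, Polynomial.coeff_smul,
            Polynomial.coeff_eq_zero_of_degree_lt, Polynomial.coeff_eq_zero_of_degree_lt]
          · simp
          · rw [hdeg]; exact_mod_cast hm'
          · refine lt_of_lt_of_le hf ?_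
            exact_mod_cast Nat.cast_le.2 hm'
      have hmem := ih _ hg
      have hfe : f = (f - c • p N) + c • p N := by ring
      rw [hfe]
      exact Submodule.add_mem _ hmem (Submodule.smul_mem _ _
        (Submodule.subset_span ⟨N, rfl⟩))
  intro f _
  exact key (f.natDegree + 1) f (Polynomial.degree_lt_iff_coeff_zero f _ |>.2
    fun m hm => Polynomial.coeff_eq_zero_of_natDegree_lt (by omega))

lemma linindep_of_deg (p : ℕ → Polynomial K) (hdeg : ∀ n : ℕ, (p n).degree = n) :
    LinearIndependent K p := by
  rw [linearIndependent_iff']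
  intro s
  induction s using Finset.strongInduction with
  | _ s ih =>
    intro g hsum i hi
    have hne : s.Nonempty := ⟨i, hi⟩
    set m := s.max' hne with hm
    have hgm : g m = 0 := by
      have hcoeff := congrArg (fun q => Polynomial.coeff q m) hsum
      simp only [Polynomial.finset_sum_coeff, Polynomial.coeff_smul,
        Polynomial.coeff_zero] at hcoeff
      rw [Finset.sum_eq_single m] at hcoeff
      · have hcne := Polynomial.coeff_ne_zero_of_eq_degree (hdeg m)
        rw [smul_eq_mul] at hcoeff
        exact (mul_eq_zero.1 hcoeff).resolve_right hcne
      · intro j hj hjm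
        have hjlt : j < m := lt_of_le_of_ne (Finset.le_max' s j hj) hjm
        rw [Polynomial.coeff_eq_zero_of_degree_lt (by rw [hdeg]; exact_mod_cast hjlt),
          smul_eq_mul, mul_zero]
      · intro h; exact absurd (s.max'_mem hne) h
    rcases eq_or_ne i m with rfl | him
    · exact hgm
    · have hsub : s.erase m ⊂ s := Finset.erase_ssubset (s.max'_mem hne)
      refine ih _ hsub g ?_ i (Finset.mem_erase.2 ⟨him, hi⟩)
      rw [← hsum, ← Finset.add_sum_erase s _ (s.max'_mem hne), hgm, zero_smul, zero_add]

/-- The basis of `K[x]` given by a sequence of polynomials with `deg p_n = n`. -/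
noncomputable def pBasis (p : ℕ → Polynomial K) (hdeg : ∀ n : ℕ, (p n).degree = n) :
    Module.Basis ℕ K (Polynomial K) :=
  Module.Basis.mk (linindep_of_deg K p hdeg) (span_of_deg K p hdeg)

lemma pBasis_apply (p : ℕ → Polynomial K) (hdeg : ∀ n : ℕ, (p n).degree = n) (n : ℕ) :
    pBasis K p hdeg n = p n :=
  Module.Basis.mk_apply _ _ n

lemma repr_sum (p : ℕ → Polynomial K) (hdeg : ∀ n : ℕ, (p n).degree = n) (f : Polynomial K) :
    ∑ i ∈ ((pBasis K p hdeg).repr f).support, ((pBasis K p hdeg).repr f) i • p i = f := by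
  conv_rhs => rw [← (pBasis K p hdeg).linearCombination_repr f]
  rw [Finsupp.linearCombination_apply, Finsupp.sum]
  exact Finset.sum_congr rfl fun i _ => by rw [pBasis_apply]

/-! ### The key reindexing identity -/

lemma key_sum (p : ℕ → Polynomial K) (n : ℕ) (y : K) :
    ∑ k ∈ Finset.range (n + 2),
        (fibnom K (n + 1) k * (p (n + 1 - k)).eval y) • ((Nat.fib k : K) • p (k - 1))
      = (Nat.fib (n + 1) : K) •
        ∑ j ∈ Finset.range (n + 1), (fibnom K n j * (p (n - j)).eval y) • p j := by
  rw [show n + 2 = (n + 1) + 1 from rfl, Finset.sum_range_succ']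
  simp only [Nat.fib_zero, Nat.cast_zero, zero_smul, smul_zero, add_zero]
  rw [Finset.smul_sum]
  apply Finset.sum_congr rfl
  intro j hj
  rw [Finset.mem_range] at hj
  have hkey : fibnom K (n + 1) (j + 1) * (Nat.fib (j + 1) : K)
      = (Nat.fib (n + 1) : K) * fibnom K n j := by
    simpa using fibnom_key K (show j < n + 1 by omega)
  have he : n + 1 - (j + 1) = n - j := by omega
  rw [he, Nat.add_sub_cancel, smul_smul, smul_smul]
  congr 1
  linear_combination (p (n - j)).eval y * hkey

/-! ### Kernel lemma -/

lemma ker_lemma (p : ℕ → Polynomial K) (hdeg : ∀ n : ℕ, (p n).degree = n)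
    (Q : Module.End K (Polynomial K))
    (hQu : ∀ n : ℕ, Q (p n) = (Nat.fib n : K) • p (n - 1)) (hp0 : p 0 = 1)
    {f : Polynomial K} (h1 : Q f = 0) (h2 : f.eval 0 = 0) : f = 0 := by
  set c := (pBasis K p hdeg).repr f with hc
  have hf : ∑ i ∈ c.support, c i • p i = f := repr_sum K p hdeg f
  have hQf : ∑ i ∈ c.support, (c i * (Nat.fib i : K)) • p (i - 1) = 0 := by
    rw [← h1, ← hf, map_sum]
    exact Finset.sum_congr rfl fun i _ => by rw [map_smul, hQu i, smul_smul]
  set s := c.support.erase 0 with hs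
  have hQf' : ∑ i ∈ s, (c i * (Nat.fib i : K)) • p (i - 1) = 0 := by
    rw [← hQf]
    apply Finset.sum_subset (Finset.erase_subset 0 c.support)
    intro x hx hxs
    have : x = 0 := by
      by_contra hx0
      exact hxs (Finset.mem_erase.2 ⟨hx0, hx⟩)
    subst this
    simp
  have himg : ∑ j ∈ s.image (· - 1), (c (j + 1) * (Nat.fib (j + 1) : K)) • p j = 0 := by
    rw [Finset.sum_image (fun x hx y hy hxy => by
      have hx0 : x ≠ 0 := (Finset.mem_erase.1 hx).1
      have hy0 : y ≠ 0 := (Finset.mem_erase.1 hy).1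
      omega)]
    rw [← hQf']
    apply Finset.sum_congr rfl
    intro i hi
    have hi0 : i ≠ 0 := (Finset.mem_erase.1 hi).1
    have : i - 1 + 1 = i := by omega
    rw [this]
  have hz := linearIndependent_iff'.1 (linindep_of_deg K p hdeg) _ _ himg
  have hci : ∀ i ∈ c.support, i ≠ 0 → c i = 0 := by
    intro i hi hi0
    have hmem : i - 1 ∈ s.image (· - 1) :=
      Finset.mem_image_of_mem _ (Finset.mem_erase.2 ⟨hi0, hi⟩)
    have := hz _ hmem
    rw [show i - 1 + 1 = i by omega] at this
    exact (mul_eq_zero.1 this).resolve_right (fib_cast_ne_zero' K (by omega))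
  have hf0 : f = c 0 • p 0 := by
    rw [← hf]
    apply Finset.sum_eq_single 0
    · intro b hb hb0
      rw [hci b hb hb0, zero_smul]
    · intro h0
      rw [Finsupp.notMem_support_iff.1 h0, zero_smul]
  rw [hp0] at hf0
  have : f.eval 0 = c 0 := by rw [hf0]; simp
  rw [h2] at this
  rw [hf0, ← this, zero_smul]

/-! ### Forward direction: basic sequence → binomial type -/

lemma forward_dir (p : ℕ → Polynomial K) (hdeg : ∀ n : ℕ, (p n).degree = n)
    (Q : Module.End K (Polynomial K)) (hQ : DeltaOp K Q) (hB : BasicSeq K Q p) :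
    ∀ (y : K) (n : ℕ), Etrans K y (p n) =
      ∑ k ∈ Finset.range (n + 1), (fibnom K n k * (p (n - k)).eval y) • p k := by
  obtain ⟨hSI, c, hc0, hQX⟩ := hQ
  obtain ⟨_, hp0, hev0, hQp⟩ := hB
  have hQ1 : Q 1 = 0 := by
    have h := hSI 1 X
    rw [Etrans_X, hQX, Etrans_C, map_add] at h
    rw [hQX] at h
    have hC1 : Q (C 1) = 0 := by
      have := add_eq_left.1 h
      exact this
    rwa [map_one C] at hC1
  have hQu : ∀ n : ℕ, Q (p n) = (Nat.fib n : K) • p (n - 1) := by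
    intro n
    cases n with
    | zero => rw [hp0, hQ1]; simp
    | succ n => exact hQp (n + 1) (by omega)
  intro y n
  induction n with
  | zero =>
    rw [hp0, Etrans_one, Finset.sum_range_one]
    rw [Nat.sub_zero, hp0, fibnom_zero_right]
    simp
  | succ n ih =>
    have h1 : Q (Etrans K y (p (n + 1))) = (Nat.fib (n + 1) : K) •
        ∑ j ∈ Finset.range (n + 1), (fibnom K n j * (p (n - j)).eval y) • p j := by
      rw [hSI y (p (n + 1)), hQu (n + 1), Nat.add_sub_cancel, Etrans_smul, ih]
    have h2 : Q (∑ k ∈ Finset.range (n + 2),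
        (fibnom K (n + 1) k * (p (n + 1 - k)).eval y) • p k) = (Nat.fib (n + 1) : K) •
        ∑ j ∈ Finset.range (n + 1), (fibnom K n j * (p (n - j)).eval y) • p j := by
      rw [map_sum, ← key_sum K p n y]
      exact Finset.sum_congr rfl fun k _ => by rw [map_smul, hQu k]
    set d := Etrans K y (p (n + 1)) - ∑ k ∈ Finset.range (n + 2),
        (fibnom K (n + 1) k * (p (n + 1 - k)).eval y) • p k with hd
    have hQd : Q d = 0 := by rw [hd, map_sub, h1, h2, sub_self]
    have hde : d.eval 0 = 0 := by
      rw [hd, eval_sub, Etrans_eval_zero, Polynomial.eval_finset_sum]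
      rw [Finset.sum_eq_single 0]
      · rw [Nat.sub_zero, fibnom_zero_right, one_mul, hp0, eval_smul]
        simp
      · intro k hk hk0
        rw [eval_smul, hev0 k (by omega)]
        simp
      · intro h; exact absurd (Finset.mem_range.2 (by omega)) h
    have := ker_lemma K p hdeg Q hQu hp0 hQd hde
    have := sub_eq_zero.1 this
    exact this

/-! ### Backward direction: binomial type → basic sequence -/

lemma backward_dir (p : ℕ → Polynomial K) (hdeg : ∀ n : ℕ, (p n).degree = n)
    (hbin : ∀ (y : K) (n : ℕ), Etrans K y (p n) =
      ∑ k ∈ Finset.range (n + 1), (fibnom K n k * (p (n - k)).eval y) • p k) :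
    ∃ Q : Module.End K (Polynomial K), DeltaOp K Q ∧ BasicSeq K Q p := by
  -- the evaluation identity
  have heval : ∀ (n : ℕ) (y : K), (p n).eval y =
      ∑ k ∈ Finset.range (n + 1), fibnom K n k * (p (n - k)).eval y * (p k).eval 0 := by
    intro n y
    have h := congrArg (fun q => Polynomial.eval 0 q) (hbin y n)
    simp only [Etrans_eval_zero, Polynomial.eval_finset_sum, eval_smul, smul_eq_mul] at h
    exact h
  -- p 0 = 1
  have hp0 : p 0 = 1 := by
    have hple : (p 0).degree ≤ 0 := le_of_eq (hdeg 0)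
    have hpc : p 0 = C ((p 0).coeff 0) := Polynomial.eq_C_of_degree_le_zero hple
    have hc0 : (p 0).coeff 0 ≠ 0 := Polynomial.coeff_ne_zero_of_eq_degree (hdeg 0)
    have h := heval 0 0
    rw [Finset.sum_range_one, Nat.sub_zero, fibnom_zero_right, one_mul] at h
    have he : (p 0).eval 0 = (p 0).coeff 0 := by rw [hpc]; simp
    rw [he] at h
    have h' : (p 0).coeff 0 * 1 = (p 0).coeff 0 * (p 0).coeff 0 := by
      rw [mul_one]; exact h
    have h1 : (1 : K) = (p 0).coeff 0 := mul_left_cancel₀ hc0 h'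
    rw [hpc, ← h1, map_one]
  -- eval at 0 vanishes for n ≥ 1
  have hev0 : ∀ n : ℕ, 1 ≤ n → (p n).eval 0 = 0 := by
    intro n
    induction n using Nat.strong_induction_on with
    | _ n ih =>
      intro hn
      have h := heval n 0
      rw [Finset.sum_range_succ'] at h
      rw [Nat.sub_zero, fibnom_zero_right, one_mul, hp0, eval_one, mul_one] at h
      rw [Finset.sum_eq_single (n - 1)] at h
      · rw [show n - 1 + 1 = n by omega, fibnom_self, one_mul, Nat.sub_self, hp0,
          eval_one, one_mul] at h
        exact left_eq_add.1 h
      · intro k hk hk1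
        rw [Finset.mem_range] at hk
        rw [ih (k + 1) (by omega) (by omega), mul_zero]
      · intro habs
        exact absurd (Finset.mem_range.2 (by omega)) habs
  -- the operator
  set Q : Module.End K (Polynomial K) :=
    (pBasis K p hdeg).constr K (fun n => (Nat.fib n : K) • p (n - 1)) with hQdef
  have hQu : ∀ n : ℕ, Q (p n) = (Nat.fib n : K) • p (n - 1) := by
    intro n
    conv_lhs => rw [← pBasis_apply K p hdeg n]
    exact Module.Basis.constr_basis _ _ _ n
  -- Q X is a nonzero constant
  have ha : (p 1).coeff 1 ≠ 0 := Polynomial.coeff_ne_zero_of_eq_degree (hdeg 1)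
  set a := (p 1).coeff 1 with hadef
  have hp1 : p 1 = C a * X := by
    have h01 := Polynomial.eq_X_add_C_of_degree_le_one (le_of_eq (hdeg 1))
    rw [Polynomial.coeff_zero_eq_eval_zero, hev0 1 le_rfl, map_zero, add_zero] at h01
    exact h01
  have hX : (X : Polynomial K) = a⁻¹ • p 1 := by
    rw [hp1, ← Polynomial.smul_eq_C_mul, smul_smul, inv_mul_cancel₀ ha, one_smul]
  have hQX : Q X = C a⁻¹ := by
    rw [hX, map_smul, hQu 1, Nat.fib_one, Nat.cast_one, one_smul, hp0,
      Polynomial.smul_eq_C_mul, mul_one]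
  -- shift invariance
  have hper : ∀ (y : K) (i : ℕ), Q (Etrans K y (p i)) = Etrans K y (Q (p i)) := by
    intro y i
    cases i with
    | zero =>
      rw [hbin y 0, hQu 0, Finset.sum_range_one, map_smul, hQu 0]
      simp [Etrans_zero]
    | succ n =>
      rw [hbin y (n + 1), map_sum]
      have hstep : ∑ k ∈ Finset.range (n + 2),
          Q ((fibnom K (n + 1) k * (p (n + 1 - k)).eval y) • p k)
          = ∑ k ∈ Finset.range (n + 2),
          (fibnom K (n + 1) k * (p (n + 1 - k)).eval y) • ((Nat.fib k : K) • p (k - 1)) :=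
        Finset.sum_congr rfl fun k _ => by rw [map_smul, hQu k]
      rw [hstep, key_sum K p n y, hQu (n + 1), Nat.add_sub_cancel, Etrans_smul, hbin y n]
  have hSI : ShiftInv K Q := by
    intro y f
    have lhs_eq : Q (Etrans K y f) =
        ∑ i ∈ ((pBasis K p hdeg).repr f).support,
          ((pBasis K p hdeg).repr f) i • Etrans K y (Q (p i)) := by
      conv_lhs => rw [← repr_sum K p hdeg f]
      rw [Etrans_sum, map_sum]
      apply Finset.sum_congr rfl
      intro i _
      rw [Etrans_smul, map_smul, hper y i]
    have rhs_eq : Etrans K y (Q f) =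
        ∑ i ∈ ((pBasis K p hdeg).repr f).support,
          ((pBasis K p hdeg).repr f) i • Etrans K y (Q (p i)) := by
      conv_lhs => rw [← repr_sum K p hdeg f]
      rw [map_sum, Etrans_sum]
      apply Finset.sum_congr rfl
      intro i _
      rw [map_smul, Etrans_smul]
    rw [lhs_eq, rhs_eq]
  refine ⟨Q, ⟨hSI, a⁻¹, inv_ne_zero ha, hQX⟩, hdeg, hp0, hev0, fun n hn => hQu n⟩

/-- a polynomial sequence with `deg p_n = n` is the `∂_F`-basic sequence of
some `∂_F`-delta operator iff it is of F-binomial type. -/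
theorem basic_iff_binomial_type (p : ℕ → Polynomial K) (hdeg : ∀ n : ℕ, (p n).degree = n) :
    (∃ Q : Module.End K (Polynomial K), DeltaOp K Q ∧ BasicSeq K Q p) ↔
      ∀ (y : K) (n : ℕ), Etrans K y (p n) =
        ∑ k ∈ Finset.range (n + 1), (fibnom K n k * (p (n - k)).eval y) • p k := by
  constructor
  · rintro ⟨Q, hQ, hB⟩
    exact forward_dir K p hdeg Q hQ hB
  · intro hbin
    exact backward_dir K p hdeg hbin
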